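/- arXiv:1703.02452 — 3 statements merged into one kernel-verified Lean document; each statement's English description precedes it below -/
import Mathlib

section
/- Let G be a finite group with a minimal normal abelian subgroup N and a Sylow p-subgroup P such that G = N·N_G(P). If N ∩ N_G(P) is nontrivial, then N normalizes P, and hence P is normal in G. -/
namespace Subgroup

variable {G : Type*} [Group G]

theorem le_normalizer_inf_left_of_isMulCommutative (N H : Subgroup G) [IsMulCommutative N] :
    N ≤ normalizer ((N ⊓ H : Subgroup G) : Set G) :=
  calc N ≤ centralizer N := le_centralizer N
    _ ≤ centralizer (N ⊓ H : Subgroup G) := centralizer_le inf_le_left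
    _ ≤ normalizer ((N ⊓ H : Subgroup G) : Set G) := centralizer_le_normalizer _

theorem normal_inf_of_sup_eq_top {N H : Subgroup G} [N.Normal] [IsMulCommutative N]
    (hNH : N ⊔ H = ⊤) : (N ⊓ H).Normal := by
  have hH : H ≤ normalizer ((N ⊓ H : Subgroup G) : Set G) :=
    (le_inf le_normalizer_of_normal le_normalizer).trans inf_normalizer_le_normalizer_inf
  rw [← normalizer_eq_top_iff, eq_top_iff, ← hNH]
  exact sup_le (le_normalizer_inf_left_of_isMulCommutative N H) hH

end Subgroup

theorem minimal_normal_inter_normalizer_general (p : ℕ) (G : Type) [Group G]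
    (N : Subgroup G) (hN : N.Normal)
    (hmin : ∀ K : Subgroup G, K.Normal → K ≤ N → K = ⊥ ∨ K = N)
    (hab : ∀ a ∈ N, ∀ b ∈ N, a * b = b * a)
    (P : Sylow p G) (hgen : N ⊔ Subgroup.normalizer ((P : Subgroup G) : Set G) = ⊤)
    (hnontriv : N ⊓ Subgroup.normalizer ((P : Subgroup G) : Set G) ≠ ⊥) :
    N ≤ Subgroup.normalizer ((P : Subgroup G) : Set G) ∧ (P : Subgroup G).Normal := by
  have : IsMulCommutative N :=
    Subgroup.le_centralizer_iff_isMulCommutative.mp fun b hb a ha ↦ hab a ha b hb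
  have hNP : N ≤ Subgroup.normalizer ((P : Subgroup G) : Set G) :=
    ((hmin _ (Subgroup.normal_inf_of_sup_eq_top hgen) inf_le_left).resolve_left hnontriv).ge.trans
      inf_le_right
  refine ⟨hNP, Subgroup.normalizer_eq_top_iff.mp ?_⟩
  rwa [← sup_eq_right.mpr hNP]

/-- Let `G` be a finite group with an abelian minimal normal subgroup `N` and a Sylow
`p`-subgroup `P` such that `G = N · N_G(P)`.  If `N ∩ N_G(P)` is nontrivial, then `N`
normalizes `P`, and hence `P` is normal in `G`. -/
theorem minimal_normal_inter_normalizer (p : ℕ) [Fact p.Prime] (G : Type) [Group G]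
    [Finite G] (N : Subgroup G) (hN : N.Normal) (hNbot : N ≠ ⊥)
    (hmin : ∀ K : Subgroup G, K.Normal → K ≤ N → K = ⊥ ∨ K = N)
    (hab : ∀ a ∈ N, ∀ b ∈ N, a * b = b * a)
    (P : Sylow p G) (hgen : N ⊔ Subgroup.normalizer ((P : Subgroup G) : Set G) = ⊤)
    (hnontriv : N ⊓ Subgroup.normalizer ((P : Subgroup G) : Set G) ≠ ⊥) :
    N ≤ Subgroup.normalizer ((P : Subgroup G) : Set G) ∧ (P : Subgroup G).Normal :=
  minimal_normal_inter_normalizer_general p G N hN hmin hab P hgen hnontriv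
end

section
/- Let G be a finite solvable group, p a prime, and suppose that every monomial irreducible ordinary character χ of G has degree χ(1) not divisible by p. Then G has a normal Sylow p-subgroup. -/
/-- The space of the representation of `G` induced from a linear character `lam` of `H`:
functions `f : G → k` with `f (h * g) = lam h * f g`. -/
def IndSpace (k : Type) [Field k] {G : Type} [Group G] (H : Subgroup G) (lam : H →* kˣ) :
    Submodule k (G → k) where
  carrier := {f | ∀ (h : H) (g : G), f ((h : G) * g) = (lam h : k) * f g}
  add_mem' := by
    intro a b ha hb h g
    simp only [Pi.add_apply, ha h g, hb h g, mul_add]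
  zero_mem' := by intro h g; simp
  smul_mem' := by
    intro c f hf h g
    simp only [Pi.smul_apply, smul_eq_mul, hf h g]
    ring

/-- The representation of `G` on `IndSpace k H lam` by right translation; this is the
representation induced from the linear character `lam` of `H`. -/
def indRep (k : Type) [Field k] {G : Type} [Group G] (H : Subgroup G) (lam : H →* kˣ) :
    Representation k G (IndSpace k H lam) where
  toFun x :=
    { toFun := fun f => ⟨fun g => (f : G → k) (g * x), by
        intro h g
        simpa [mul_assoc] using f.2 h (g * x)⟩
      map_add' := by intro a b; ext g; simp
      map_smul' := by intro c f; ext g; simp }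
  map_one' := by ext f g; simp
  map_mul' := by intro x y; ext f g; simp [mul_assoc]

/-!
Induction on `|G|`. A minimal normal subgroup `N` is abelian since `G` is solvable, and the
hypothesis passes to `G/N` by inflation, so `PN/N` is a normal Sylow subgroup of `G/N` and the
Frattini argument gives `G = N_G(P) N`. If `N_G(P) < G`, a maximal subgroup `M ⊇ N_G(P)` is a
complement to `N`, and `P` does not centralize `N`. Then some linear `θ` of `N` is not
`P`-invariant. Through the complement `M`, `θ` extends to a linear `μ` of its inertia group
`T = I_G(θ)`, and `μ^G` is irreducible by Mackey's criterion. Every Sylow `p`-subgroup `S`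
satisfies `SN = PN`, so none lies in `T ⊇ N`; hence `p ∣ |G : T| = μ^G(1)`, a contradiction.
-/

namespace Representation

variable {k G V₁ V₂ : Type*} [Field k] [Monoid G] [AddCommGroup V₁] [Module k V₁]
  [AddCommGroup V₂] [Module k V₂]

theorem isIrreducible_of_forall_mem {ρ : Representation k G V₁} (v : V₁) (hv : v ≠ 0)
    (htop : ∀ σ : Subrepresentation ρ, v ∈ σ → σ = ⊤)
    (hmem : ∀ σ : Subrepresentation ρ, ∀ w ∈ σ, w ≠ 0 → v ∈ σ) : ρ.IsIrreducible where
  exists_pair_ne := ⟨⊥, ⊤, fun h => hv (by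
    have : v ∈ (⊤ : Subrepresentation ρ) := Submodule.mem_top
    rwa [← h] at this)⟩
  eq_bot_or_eq_top σ := by
    by_cases h : ∃ w ∈ σ, w ≠ 0
    · obtain ⟨w, hw, hw0⟩ := h
      exact .inr (htop σ (hmem σ w hw hw0))
    · push Not at h
      exact .inl (SetLike.ext fun w => ⟨h w, fun hw => by
        rw [(show w = 0 from hw)]; exact σ.toSubmodule.zero_mem⟩)

variable {G' : Type*} [Monoid G']

theorem isIrreducible_of_surjective {ρ : Representation k G V₁}
    {ρ' : Representation k G' V₂} {φ : G →* G'} (hφ : Function.Surjective φ) (e : V₂ ≃ₗ[k] V₁)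
    (he : ∀ g v, e (ρ' (φ g) v) = ρ g (e v)) [ρ'.IsIrreducible] : ρ.IsIrreducible := by
  let iso : Subrepresentation ρ' ≃o Subrepresentation ρ :=
    { toFun τ := ⟨τ.toSubmodule.map (e : V₂ →ₗ[k] V₁), by
        rintro g _ ⟨v, hv, rfl⟩
        exact ⟨ρ' (φ g) v, τ.apply_mem_toSubmodule (φ g) hv, he g v⟩⟩
      invFun σ := ⟨σ.toSubmodule.comap (e : V₂ →ₗ[k] V₁), fun g' v hv => by
        obtain ⟨g, rfl⟩ := hφ g'
        simpa only [Submodule.mem_comap, LinearEquiv.coe_coe, he]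
          using σ.apply_mem_toSubmodule g hv⟩
      left_inv τ := by ext v; simp
      right_inv σ := by ext v; simp
      map_rel_iff' {τ σ} := Submodule.map_le_map_iff_of_injective e.injective
        τ.toSubmodule σ.toSubmodule }
  exact iso.symm.isSimpleOrder_iff.mpr inferInstance

end Representation

namespace IndSpace

variable {k : Type} [Field k] {G : Type} [Group G] {H : Subgroup G} {μ : H →* kˣ}

theorem apply_mul (f : IndSpace k H μ) (h : H) (g : G) :
    (f : G → k) (h * g) = μ h * (f : G → k) g :=
  f.2 h g

@[simp]
theorem indRep_apply (x : G) (f : IndSpace k H μ) (g : G) :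
    (indRep k H μ x f : G → k) g = (f : G → k) (g * x) :=
  rfl

variable (H) in
noncomputable def rightCosetFactor (g : G) : H :=
  ⟨g * (⟦g⟧ : Quotient (QuotientGroup.rightRel H)).out⁻¹,
    QuotientGroup.rightRel_apply.mp (Quotient.mk_out (s := QuotientGroup.rightRel H) g)⟩

theorem rightCosetFactor_mul_out (g : G) :
    (rightCosetFactor H g : G) * (⟦g⟧ : Quotient (QuotientGroup.rightRel H)).out = g := by
  simp [rightCosetFactor]

theorem mk_mul_eq_mk (h : H) (g : G) :
    (⟦h * g⟧ : Quotient (QuotientGroup.rightRel H)) = ⟦g⟧ :=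
  Quotient.sound (QuotientGroup.rightRel_apply.mpr (by simp))

theorem rightCosetFactor_mul (h : H) (g : G) :
    rightCosetFactor H (h * g) = h * rightCosetFactor H g := by
  ext
  simp [rightCosetFactor, mk_mul_eq_mk, mul_assoc]

@[simp]
theorem rightCosetFactor_out (q : Quotient (QuotientGroup.rightRel H)) :
    rightCosetFactor H q.out = 1 := by
  ext
  simp [rightCosetFactor, Quotient.out_eq]

variable (k H μ) in
noncomputable def equivFunOnRightCosets :
    IndSpace k H μ ≃ₗ[k] (Quotient (QuotientGroup.rightRel H) → k) where
  toFun f q := (f : G → k) q.out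
  map_add' _ _ := rfl
  map_smul' _ _ := rfl
  invFun c := ⟨fun g => μ (rightCosetFactor H g) * c ⟦g⟧, fun h g => by
    simp [rightCosetFactor_mul, mk_mul_eq_mk, mul_assoc]⟩
  left_inv f := by
    ext g
    have := apply_mul f (rightCosetFactor H g) (⟦g⟧ : Quotient (QuotientGroup.rightRel H)).out
    rw [rightCosetFactor_mul_out] at this
    exact this.symm
  right_inv c := by
    ext q
    simp [Quotient.out_eq]

theorem finrank_eq_index [Finite G] : Module.finrank k (IndSpace k H μ) = H.index := by
  have : Fintype (Quotient (QuotientGroup.rightRel H)) := Fintype.ofFinite _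
  rw [(equivFunOnRightCosets k H μ).finrank_eq, Module.finrank_fintype_fun_eq_card,
    ← Nat.card_eq_fintype_card,
    Nat.card_congr (QuotientGroup.quotientRightRelEquivQuotientLeftRel H), Subgroup.index]

variable (H μ) in
open scoped Classical in
noncomputable def indDelta : IndSpace k H μ :=
  ⟨fun g => if hg : g ∈ H then μ ⟨g, hg⟩ else 0, fun h g => by
    by_cases hg : g ∈ H
    · have hhg : (h : G) * g ∈ H := H.mul_mem h.2 hg
      simp only [dif_pos hg, dif_pos hhg]
      rw [show (⟨h * g, hhg⟩ : H) = h * ⟨g, hg⟩ from rfl, map_mul, Units.val_mul]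
    · have hhg : (h : G) * g ∉ H := fun hc => hg ((H.mul_mem_cancel_left h.2).mp hc)
      simp only [dif_neg hg, dif_neg hhg, mul_zero]⟩

theorem indDelta_apply_coe (h : H) : (indDelta H μ : G → k) h = μ h := by
  simp [indDelta]

theorem indDelta_apply_of_notMem {g : G} (hg : g ∉ H) : (indDelta H μ : G → k) g = 0 := by
  simp [indDelta, hg]

theorem indDelta_ne_zero : indDelta H μ ≠ 0 := fun h => by
  simpa [h] using indDelta_apply_coe (μ := μ) 1

theorem eq_smul_indDelta (f : IndSpace k H μ) (hf : ∀ g ∉ H, (f : G → k) g = 0) :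
    f = (f : G → k) 1 • indDelta H μ := by
  ext g
  by_cases hg : g ∈ H
  · obtain ⟨h, rfl⟩ : ∃ h : H, (h : G) = g := ⟨⟨g, hg⟩, rfl⟩
    simpa [indDelta_apply_coe, mul_comm] using apply_mul f h 1
  · simp [hf g hg, indDelta_apply_of_notMem hg]

theorem sum_smul_indRep_indDelta [Fintype (Quotient (QuotientGroup.rightRel H))]
    (f : IndSpace k H μ) :
    ∑ q : Quotient (QuotientGroup.rightRel H),
      (f : G → k) q.out • indRep k H μ q.out⁻¹ (indDelta H μ) = f := by
  ext x
  simp only [AddSubmonoidClass.coe_finsetSum, Finset.sum_apply, SetLike.val_smul,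
    Pi.smul_apply, indRep_apply, smul_eq_mul]
  rw [Finset.sum_eq_single (⟦x⟧ : Quotient (QuotientGroup.rightRel H))]
  · have hx : x * (⟦x⟧ : Quotient (QuotientGroup.rightRel H)).out⁻¹ = rightCosetFactor H x := rfl
    conv_rhs => rw [← rightCosetFactor_mul_out (H := H) x]
    rw [hx, indDelta_apply_coe, apply_mul, mul_comm]
  · intro q _ hq
    rw [indDelta_apply_of_notMem, mul_zero]
    intro hx
    exact hq (by
      rw [← Quotient.out_eq q]
      exact Quotient.sound (QuotientGroup.rightRel_apply.mpr hx))
  · simp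

end IndSpace

namespace IndSpace

variable {k : Type} [Field k] {G G' : Type} [Group G] [Group G']

noncomputable def comap (φ : G →* G') (H' : Subgroup G') (μ' : H' →* kˣ) :
    IndSpace k H' μ' →ₗ[k] IndSpace k (H'.comap φ) (μ'.comp (φ.subgroupComap H')) where
  toFun f := ⟨fun g => (f : G' → k) (φ g), fun h g => by
    beta_reduce
    rw [map_mul]
    exact apply_mul f (φ.subgroupComap H' h) (φ g)⟩
  map_add' _ _ := rfl
  map_smul' _ _ := rfl

variable {φ : G →* G'} {H' : Subgroup G'} {μ' : H' →* kˣ}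

theorem comap_bijective [Finite G] (hφ : Function.Surjective φ) :
    Function.Bijective (comap φ H' μ') := by
  have : Finite G' := Finite.of_surjective φ hφ
  have hinj : Function.Injective (comap φ H' μ') := fun f₁ f₂ h =>
    Subtype.ext (hφ.injective_comp_right (congrArg Subtype.val h))
  refine ⟨hinj, (LinearMap.injective_iff_surjective_of_finrank_eq_finrank ?_).mp hinj⟩
  rw [finrank_eq_index, finrank_eq_index, Subgroup.index_comap_of_surjective H' hφ]

theorem isIrreducible_indRep_comap [Finite G] (hφ : Function.Surjective φ)
    [(indRep k H' μ').IsIrreducible] :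
    (indRep k (H'.comap φ) (μ'.comp (φ.subgroupComap H'))).IsIrreducible :=
  Representation.isIrreducible_of_surjective (ρ' := indRep k H' μ') hφ
    (LinearEquiv.ofBijective _ (comap_bijective hφ)) fun g f => by
      ext x
      simp [comap]

end IndSpace

theorem Subgroup.IsComplement'.equiv_fst_mul {G : Type*} [Group G] {N M : Subgroup G} [N.Normal]
    (hc : N.IsComplement' M) (g₁ g₂ : G) :
    ((hc.equiv (g₁ * g₂)).1 : G) = (hc.equiv g₁).1 *
      ((hc.equiv g₁).2 * ((hc.equiv g₂).1 : G) * ((hc.equiv g₁).2 : G)⁻¹) := by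
  set n₁ := hc.equiv g₁ |>.1
  set m₁ := hc.equiv g₁ |>.2
  set n₂ := hc.equiv g₂ |>.1
  set m₂ := hc.equiv g₂ |>.2
  have hn : (n₁ : G) * (m₁ * n₂ * (m₁ : G)⁻¹) ∈ N :=
    N.mul_mem n₁.2 (‹N.Normal›.conj_mem _ n₂.2 _)
  have hg : g₁ * g₂ = hc.equiv.symm (⟨_, hn⟩, ⟨m₁ * m₂, M.mul_mem m₁.2 m₂.2⟩) := by
    rw [Subgroup.IsComplement.equiv_symm_apply]
    conv_lhs => rw [← hc.equiv_fst_mul_equiv_snd g₁, ← hc.equiv_fst_mul_equiv_snd g₂]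
    simp only [n₁, m₁, n₂, m₂]
    group
  rw [hg, Equiv.apply_symm_apply]

section Inertia

variable {G : Type*} [Group G] {N : Subgroup G} [N.Normal] {A : Type*}

/-- The inertia group `I_G(θ)`. -/
def inertiaGroup [Monoid A] (θ : N →* A) : Subgroup G where
  carrier := {g | ∀ n : N, θ (MulAut.conjNormal g n) = θ n}
  one_mem' n := by simp
  mul_mem' {g h} hg hh n := by rw [map_mul, MulAut.mul_apply, hg, hh]
  inv_mem' {g} hg n := by
    rw [← hg (MulAut.conjNormal g⁻¹ n), ← MulAut.mul_apply, ← map_mul, mul_inv_cancel, map_one,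
      MulAut.one_apply]

theorem mem_inertiaGroup [Monoid A] {θ : N →* A} {g : G} :
    g ∈ inertiaGroup θ ↔ ∀ n : N, θ (MulAut.conjNormal g n) = θ n :=
  Iff.rfl

theorem le_inertiaGroup [CommMonoid A] (θ : N →* A) : N ≤ inertiaGroup θ := fun m hm n => by
  have : MulAut.conjNormal m n = ⟨m, hm⟩ * n * (⟨m, hm⟩ : N)⁻¹ := Subtype.ext (by simp)
  rw [this, map_mul, map_mul, mul_right_comm, ← map_mul, mul_inv_cancel, map_one, one_mul]

/-- The extension is `n * m ↦ θ n` for `n ∈ N`, `m ∈ M`. -/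
theorem exists_comp_inclusion_inertiaGroup_eq [CommMonoid A] {M : Subgroup G}
    (hc : N.IsComplement' M) (θ : N →* A) :
    ∃ μ : inertiaGroup θ →* A, μ.comp (Subgroup.inclusion (le_inertiaGroup θ)) = θ := by
  let π : G → N := fun g => ⟨(hc.equiv g).1, (hc.equiv g).1.2⟩
  have hπN (n : N) : π n = n :=
    Subtype.ext (congrArg Subtype.val (hc.equiv_fst_eq_self_of_mem_of_one_mem M.one_mem n.2))
  have hπmul (g₁ g₂ : G) :
      π (g₁ * g₂) = π g₁ * MulAut.conjNormal ((hc.equiv g₁).2 : G) (π g₂) :=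
    Subtype.ext (hc.equiv_fst_mul g₁ g₂)
  refine ⟨{ toFun t := θ (π t), map_one' := ?_, map_mul' t₁ t₂ := ?_ }, ?_⟩
  · simpa using congrArg θ (hπN 1)
  · have hm : ((hc.equiv (t₁ : G)).2 : G) ∈ inertiaGroup θ := by
      rw [hc.equiv_snd_eq_inv_mul]
      exact (inertiaGroup θ).mul_mem ((inertiaGroup θ).inv_mem (le_inertiaGroup θ (π t₁).2)) t₁.2
    simp only [Subgroup.coe_mul, hπmul, map_mul, mem_inertiaGroup.mp hm]
  · ext n
    simp [hπN]

open scoped IsMulCommutative in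
theorem exists_notMem_inertiaGroup [Finite N] [IsMulCommutative N] [CommMonoid A]
    [HasEnoughRootsOfUnity A (Monoid.exponent N)] {x : G} (hx : x ∉ Subgroup.centralizer N) :
    ∃ θ : N →* Aˣ, x ∉ inertiaGroup θ := by
  obtain ⟨a, ha, hax⟩ : ∃ a ∈ N, a * x ≠ x * a := by
    simpa [Subgroup.mem_centralizer_iff] using hx
  have hc : MulAut.conjNormal x ⟨a, ha⟩ * (⟨a, ha⟩ : N)⁻¹ ≠ 1 := fun h => hax <| by
    have := congrArg Subtype.val (mul_inv_eq_one.mp h)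
    simp only [MulAut.conjNormal_apply] at this
    nth_rw 1 [← this]; group
  obtain ⟨θ, hθ⟩ := CommGroup.exists_apply_ne_one_of_hasEnoughRootsOfUnity N A hc
  exact ⟨θ, fun hxθ => hθ (by rw [map_mul, map_inv, mem_inertiaGroup.mp hxθ, mul_inv_cancel])⟩

end Inertia

namespace IndSpace

variable {k : Type} [Field k] {G : Type} [Group G] {N : Subgroup G} [N.Normal] {θ : N →* kˣ}
  {μ : inertiaGroup θ →* kˣ}

theorem apply_mul_of_mem_normal (hμ : μ.comp (Subgroup.inclusion (le_inertiaGroup θ)) = θ)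
    (f : IndSpace k (inertiaGroup θ) μ) (x : G) (n : N) :
    (f : G → k) (x * n) = θ (MulAut.conjNormal x n) * (f : G → k) x := by
  have hx : x * n = ((MulAut.conjNormal x n : N) : G) * x := by simp
  rw [hx, ← DFunLike.congr_fun hμ]
  exact apply_mul f (Subgroup.inclusion (le_inertiaGroup θ) (MulAut.conjNormal x n)) x

open scoped Classical in
theorem sum_inv_mul_conjNormal [Fintype N] (x : G) :
    ∑ n : N, ((θ n⁻¹ * θ (MulAut.conjNormal x n) : kˣ) : k) =
      if x ∈ inertiaGroup θ then (Fintype.card N : k) else 0 := by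
  split_ifs with hx
  · simp [mem_inertiaGroup.mp hx]
  · let χ : N →* k := (Units.coeHom k).comp (θ⁻¹ * θ.comp (MulAut.conjNormal x).toMonoidHom)
    have hχ : χ ≠ 1 := fun hχ => hx fun n => by
      have := DFunLike.congr_fun hχ n
      simp only [χ, MonoidHom.comp_apply, MonoidHom.mul_apply, MonoidHom.inv_apply,
        Units.coeHom_apply, MonoidHom.one_apply, Units.val_eq_one] at this
      exact (inv_mul_eq_one.mp this).symm
    simpa [χ] using sum_hom_units_eq_zero χ hχ

open scoped Classical in
theorem sum_smul_indRep_apply [Fintype N]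
    (hμ : μ.comp (Subgroup.inclusion (le_inertiaGroup θ)) = θ)
    (f : IndSpace k (inertiaGroup θ) μ) (x : G) :
    (↑(∑ n : N, (θ n⁻¹ : k) • indRep k (inertiaGroup θ) μ n f) : G → k) x =
      if x ∈ inertiaGroup θ then Fintype.card N * (f : G → k) x else 0 := by
  simp only [AddSubmonoidClass.coe_finsetSum, Finset.sum_apply, SetLike.val_smul,
    Pi.smul_apply, indRep_apply, smul_eq_mul, apply_mul_of_mem_normal hμ]
  simp_rw [← mul_assoc, ← Finset.sum_mul, ← Units.val_mul, sum_inv_mul_conjNormal, ite_mul,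
    zero_mul]

theorem isIrreducible_indRep_inertiaGroup [Finite G] (hN : (Nat.card N : k) ≠ 0)
    (hμ : μ.comp (Subgroup.inclusion (le_inertiaGroup θ)) = θ) :
    (indRep k (inertiaGroup θ) μ).IsIrreducible := by
  have := Fintype.ofFinite N
  have := Fintype.ofFinite (Quotient (QuotientGroup.rightRel (inertiaGroup θ)))
  refine Representation.isIrreducible_of_forall_mem (indDelta _ μ) indDelta_ne_zero
    (fun σ hσ => ?_) (fun σ f hf hf0 => ?_)
  · refine eq_top_iff.mpr fun f _ => ?_
    rw [← sum_smul_indRep_indDelta f]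
    exact σ.toSubmodule.sum_mem fun q _ =>
      σ.toSubmodule.smul_mem _ (σ.apply_mem_toSubmodule _ hσ)
  obtain ⟨a, ha⟩ : ∃ a, (f : G → k) a ≠ 0 := by
    by_contra! h
    exact hf0 (Subtype.ext (funext h))
  -- Averaging the translate of `f` by `a` against `θ` over `N` kills it off `I_G(θ)`.
  set g := ∑ n : N, (θ n⁻¹ : k) • indRep k (inertiaGroup θ) μ n (indRep k _ μ a f)
  have hgσ : g ∈ σ := σ.toSubmodule.sum_mem fun n _ => σ.toSubmodule.smul_mem _
    (σ.apply_mem_toSubmodule _ (σ.apply_mem_toSubmodule _ hf))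
  have hgx := sum_smul_indRep_apply hμ (indRep k _ μ a f)
  have hg : g = (Fintype.card N * (f : G → k) a) • indDelta _ μ := by
    rw [eq_smul_indDelta g fun x hx => by rw [hgx, if_neg hx], hgx]
    simp [(inertiaGroup θ).one_mem]
  have hc : (Fintype.card N * (f : G → k) a) ≠ 0 :=
    mul_ne_zero (by rwa [← Nat.card_eq_fintype_card]) ha
  have := σ.toSubmodule.smul_mem (Fintype.card N * (f : G → k) a)⁻¹ hgσ
  rwa [hg, smul_smul, inv_mul_cancel₀ hc, one_smul] at this

end IndSpace

section GroupTheory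

variable {G : Type*} [Group G]

theorem isMulCommutative_of_minimal_normal [Group.IsSolvable G] {N : Subgroup G}
    (hN : Minimal (fun K : Subgroup G => K.Normal ∧ K ≠ ⊥) N) : IsMulCommutative N := by
  have := hN.prop.1
  rw [← Subgroup.commutator_self_eq_bot_iff]
  by_contra h
  exact (Group.IsSolvable.commutator_lt_of_ne_bot hN.prop.2).not_ge
    (hN.le_of_le ⟨inferInstance, h⟩ (Subgroup.commutator_le_self N))

theorem Subgroup.inf_normal_of_sup_eq_top {N M : Subgroup G} [N.Normal] [IsMulCommutative N]
    (h : N ⊔ M = ⊤) : (N ⊓ M).Normal := by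
  rw [← normalizer_eq_top_iff, eq_top_iff, ← h]
  refine sup_le ?_ ?_
  · exact (le_centralizer N).trans
      ((centralizer_le inf_le_left).trans (centralizer_le_normalizer _))
  · exact (le_inf le_normalizer_of_normal le_normalizer).trans inf_normalizer_le_normalizer_inf

theorem Subgroup.isComplement'_of_minimal_normal {N M : Subgroup G} [N.Normal] [IsMulCommutative N]
    (hN : Minimal (fun K : Subgroup G => K.Normal ∧ K ≠ ⊥) N)
    (hM : IsCoatom M) (hNM : ¬ N ≤ M) : N.IsComplement' M := by
  have hsup : N ⊔ M = ⊤ := by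
    rw [sup_comm]
    exact hM.2 _ (lt_of_le_of_ne le_sup_left fun h => hNM (h ▸ le_sup_right))
  have := inf_normal_of_sup_eq_top hsup
  have hinf : N ⊓ M = ⊥ := by
    by_contra h
    exact hNM ((hN.le_of_le ⟨this, h⟩ inf_le_left).trans inf_le_right)
  refine isComplement'_of_disjoint_and_mul_eq_univ (disjoint_iff.mpr hinf) ?_
  rw [← normal_mul, hsup, coe_top]

theorem Sylow.exists_le_of_not_dvd_index {p : ℕ} [Fact p.Prime] [Finite G] {T : Subgroup G}
    (h : ¬ p ∣ T.index) : ∃ S : Sylow p G, S ≤ T := by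
  obtain ⟨P⟩ := Sylow.nonempty (p := p) (G := T)
  refine ⟨(P.2.map T.subtype).toSylow ?_, Subgroup.map_subtype_le _⟩
  rw [Subgroup.index_map_subtype]
  exact Nat.Prime.not_dvd_mul Fact.out P.not_dvd_index h

theorem Sylow.sup_eq_comap_of_normal {p : ℕ} [Fact p.Prime] [Finite G] {N : Subgroup G} [N.Normal]
    (Q : Sylow p (G ⧸ N)) [Q.Normal] (P : Sylow p G) :
    (P : Subgroup G) ⊔ N = (Q : Subgroup (G ⧸ N)).comap (QuotientGroup.mk' N) := by
  have := (Sylow.unique_of_normal Q inferInstance).instSubsingleton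
  rw [← Subsingleton.elim (P.mapSurjective (QuotientGroup.mk'_surjective N)) Q,
    coe_mapSurjective, Subgroup.comap_map_eq, QuotientGroup.ker_mk']

end GroupTheory

/-- No monomial `χ ∈ Irr(G)` has degree divisible by `p`; `μ^G` has degree `|G : H|`. -/
def PrimeNotDvdMonomialDegrees (p : ℕ) (G : Type) [Group G] : Prop :=
  ∀ (H : Subgroup G) (μ : H →* ℂˣ), (indRep ℂ H μ).IsIrreducible → ¬ p ∣ H.index

namespace PrimeNotDvdMonomialDegrees

variable {p : ℕ} {G : Type} [Group G]

theorem of_surjective [Finite G] (hG : PrimeNotDvdMonomialDegrees p G) {G' : Type} [Group G']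
    {φ : G →* G'} (hφ : Function.Surjective φ) : PrimeNotDvdMonomialDegrees p G' :=
  fun H' μ' _ => by
    rw [← Subgroup.index_comap_of_surjective H' hφ]
    exact hG _ _ (IndSpace.isIrreducible_indRep_comap (μ' := μ') hφ)

theorem sylow_le_centralizer [Finite G] [Fact p.Prime] (hG : PrimeNotDvdMonomialDegrees p G)
    {N M : Subgroup G} [N.Normal] [IsMulCommutative N] (hc : N.IsComplement' M) (P : Sylow p G)
    (hP : ∀ S : Sylow p G, (P : Subgroup G) ≤ (S : Subgroup G) ⊔ N) :
    (P : Subgroup G) ≤ Subgroup.centralizer N := by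
  intro x hxP
  by_contra hx
  have : NeZero (Monoid.exponent N) := ⟨Monoid.exponent_ne_zero_of_finite⟩
  obtain ⟨θ, hθ⟩ := exists_notMem_inertiaGroup (A := ℂ) hx
  obtain ⟨μ, hμ⟩ := exists_comp_inclusion_inertiaGroup_eq hc θ
  refine hG _ μ (IndSpace.isIrreducible_indRep_inertiaGroup (by simp [Nat.card_pos.ne']) hμ) ?_
  by_contra hndvd
  obtain ⟨S, hS⟩ := Sylow.exists_le_of_not_dvd_index hndvd
  exact hθ (hP S |>.trans (sup_le hS (le_inertiaGroup θ)) hxP)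

variable [Fact p.Prime] [Finite G] [Group.IsSolvable G]

theorem exists_normal_sylow_of_quotient (hG : PrimeNotDvdMonomialDegrees p G) {N : Subgroup G}
    [N.Normal] (hN : Minimal (fun K : Subgroup G => K.Normal ∧ K ≠ ⊥) N)
    (Q : Sylow p (G ⧸ N)) [Q.Normal] : ∃ P : Sylow p G, (P : Subgroup G).Normal := by
  obtain ⟨P⟩ := Sylow.nonempty (p := p) (G := G)
  refine ⟨P, ?_⟩
  have hPN := Sylow.sup_eq_comap_of_normal Q
  have : ((P : Subgroup G) ⊔ N).Normal := by rw [hPN P]; infer_instance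
  have hfrattini : Subgroup.normalizer ((P : Subgroup G) : Set G) ⊔ N = ⊤ := by
    have := Sylow.normalizer_sup_eq_top' P (le_sup_left : (P : Subgroup G) ≤ (P : Subgroup G) ⊔ N)
    change Subgroup.normalizer ((P : Subgroup G) : Set G) ⊔ ((P : Subgroup G) ⊔ N) = ⊤ at this
    rwa [← sup_assoc, sup_eq_left.mpr Subgroup.le_normalizer] at this
  rw [← Subgroup.normalizer_eq_top_iff]
  by_contra hne
  obtain ⟨M, hM, hle⟩ := (eq_top_or_exists_le_coatom _).resolve_left hne
  have hNM : ¬ N ≤ M := fun h => hM.1 (top_le_iff.mp (hfrattini ▸ sup_le hle h))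
  have := isMulCommutative_of_minimal_normal hN
  have hc := Subgroup.isComplement'_of_minimal_normal hN hM hNM
  have hPc := hG.sylow_le_centralizer hc P fun S =>
    le_sup_left.trans (hPN P ▸ (hPN S).ge)
  exact hNM ((Subgroup.le_centralizer_iff.mp hPc).trans
    ((Subgroup.centralizer_le_normalizer _).trans hle))

theorem exists_normal_sylow (hG : PrimeNotDvdMonomialDegrees p G) :
    ∃ P : Sylow p G, (P : Subgroup G).Normal := by
  induction h : Nat.card G using Nat.strong_induction_on generalizing G with
  | _ n ih =>
  rcases subsingleton_or_nontrivial G with hG1 | hG1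
  · exact ⟨default, ⟨fun a _ g => by rwa [Subsingleton.elim (g * a * g⁻¹) a]⟩⟩
  obtain ⟨N, hN⟩ := exists_minimal_of_wellFoundedLT
    (fun K : Subgroup G => K.Normal ∧ K ≠ ⊥) ⟨⊤, inferInstance, top_ne_bot⟩
  have := hN.prop.1
  have hcard : Nat.card (G ⧸ N) < n := by
    rw [← h, N.card_eq_card_quotient_mul_card_subgroup]
    exact lt_mul_of_one_lt_right Nat.card_pos (N.one_lt_card_iff_ne_bot.mpr hN.prop.2)
  obtain ⟨Q, hQ⟩ := ih _ hcard (hG.of_surjective (QuotientGroup.mk'_surjective N)) rfl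
  have : Q.Normal := hQ
  exact hG.exists_normal_sylow_of_quotient hN Q

end PrimeNotDvdMonomialDegrees

/-- **Pang–Lu, Theorem 1.3.**  Let `G` be a finite solvable group and `p` a prime.  If every
monomial irreducible ordinary (complex) character of `G` — i.e. every irreducible character
induced from a linear character `lam` of a subgroup `H`, modelled here by the induced
representation being irreducible — has degree not divisible by `p`, then `G` has a normal
Sylow `p`-subgroup. -/
theorem pang_lu_monomial_ordinary (p : ℕ) [Fact p.Prime] (G : Type) [Group G] [Finite G]
    [Group.IsSolvable G]
    (hmono : ∀ (H : Subgroup G) (lam : H →* ℂˣ),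
      IsSimpleModule (MonoidAlgebra ℂ G) (indRep ℂ H lam).asModule →
        ¬ (p ∣ Module.finrank ℂ (IndSpace ℂ H lam))) :
    ∃ P : Sylow p G, (P : Subgroup G).Normal :=
  PrimeNotDvdMonomialDegrees.exists_normal_sylow fun H μ hirr => by
    rw [← IndSpace.finrank_eq_index (k := ℂ) (μ := μ)]
    exact hmono H μ ((Representation.irreducible_iff_isSimpleModule_asModule _).mp hirr)
end

section
/- Let G be a finite group, N an abelian normal subgroup complemented in G, λ a linear character of N, and T the inertia group of λ in G. Then λ extends to a linear character ν of T. -/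
/-!
Write `g = n_g h_g` with `n_g ∈ N`, `h_g ∈ H` for a complement `H` of `N`. Then
`g g' = (n_g · h_g n_{g'} h_g⁻¹) · h_g h_{g'}`, so `g ↦ λ(n_g)` is multiplicative on every subgroup
`K ⊇ N` whose elements fix `λ`: such a `K` contains `h_g = n_g⁻¹ g` for each `g ∈ K`.
-/

namespace Subgroup.IsComplement'

variable {G : Type*} [Group G] {N H : Subgroup G} (hc : N.IsComplement' H)

theorem equiv_mul_of_mem {a b : G} (ha : a ∈ N) (hb : b ∈ H) :
    hc.equiv (a * b) = (⟨a, ha⟩, ⟨b, hb⟩) :=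
  hc.equiv.eq_symm_apply.1 rfl

variable [N.Normal]

theorem equiv_mul_fst (g g' : G) :
    (hc.equiv (g * g')).1 = (hc.equiv g).1 *
      ⟨(hc.equiv g).2 * (hc.equiv g').1 * ((hc.equiv g).2 : G)⁻¹,
        Normal.conj_mem ‹_› _ (hc.equiv g').1.2 _⟩ := by
  obtain ⟨⟨⟨n, hn⟩, ⟨h, hh⟩⟩, rfl⟩ := hc.equiv.symm.surjective g
  obtain ⟨⟨⟨n', hn'⟩, ⟨h', hh'⟩⟩, rfl⟩ := hc.equiv.symm.surjective g'
  have hconj : h * n' * h⁻¹ ∈ N := Normal.conj_mem ‹_› n' hn' h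
  simp only [IsComplement.equiv_symm_apply, hc.equiv_mul_of_mem hn hh,
    hc.equiv_mul_of_mem hn' hh']
  rw [show n * h * (n' * h') = n * (h * n' * h⁻¹) * (h * h') by group,
    hc.equiv_mul_of_mem (N.mul_mem hn hconj) (H.mul_mem hh hh')]
  rfl

section extendOfConjInvariant

variable {A : Type*} [CommGroup A] (χ : N →* A) (K : Subgroup G) (hNK : N ≤ K)
  (hχ : ∀ k ∈ K, ∀ n : N, χ ⟨k * n * k⁻¹, Normal.conj_mem ‹_› (n : G) n.2 k⟩ = χ n)

noncomputable def extendOfConjInvariant : K →* A where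
  toFun k := χ (hc.equiv k).1
  map_one' := by
    rw [coe_one, hc.equiv_fst_eq_one_of_mem_of_one_mem N.one_mem H.one_mem]
    exact map_one χ
  map_mul' k k' := by
    have hsnd : ((hc.equiv k).2 : G) ∈ K := by
      rw [hc.equiv_snd_eq_inv_mul]
      exact K.mul_mem (K.inv_mem (hNK (hc.equiv k).1.2)) k.2
    rw [coe_mul, hc.equiv_mul_fst, map_mul, hχ _ hsnd]

theorem extendOfConjInvariant_apply_of_mem (n : N) :
    hc.extendOfConjInvariant χ K hNK hχ ⟨n, hNK n.2⟩ = χ n :=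
  congrArg χ (hc.equiv_fst_eq_self_of_mem_of_one_mem H.one_mem n.2)

end extendOfConjInvariant

end Subgroup.IsComplement'

theorem linear_character_extends_to_inertia_general (G : Type) [Group G]
    (N : Subgroup G) (hN : N.Normal)
    (hcompl : ∃ H : Subgroup G, N.IsComplement' H)
    (lam : N →* ℂˣ) (T : Subgroup G) (hNT : N ≤ T)
    (hT : ∀ g : G, g ∈ T ↔ ∀ n : N,
      lam ⟨g * (n : G) * g⁻¹, hN.conj_mem n n.2 g⟩ = lam n) :
    ∃ ν : T →* ℂˣ, ∀ n : N, ν ⟨(n : G), hNT n.2⟩ = lam n := by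
  obtain ⟨H, hc⟩ := hcompl
  have hinv : ∀ t ∈ T, ∀ n : N, lam ⟨t * n * t⁻¹, hN.conj_mem n n.2 t⟩ = lam n :=
    fun t ht => (hT t).1 ht
  exact ⟨hc.extendOfConjInvariant lam T hNT hinv, hc.extendOfConjInvariant_apply_of_mem lam T hNT hinv⟩

/-- Let `G` be a finite group, `N` an abelian normal subgroup complemented in `G`,
`lam` a linear character of `N`, and `T` the inertia group of `lam` in `G`
(so `N ≤ T` and `g ∈ T` iff `lam` is fixed by conjugation by `g`).  Then `lam` extends to a
linear character `ν` of `T`. -/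
theorem linear_character_extends_to_inertia (G : Type) [Group G] [Finite G]
    (N : Subgroup G) (hN : N.Normal) (hab : ∀ a ∈ N, ∀ b ∈ N, a * b = b * a)
    (hcompl : ∃ H : Subgroup G, N.IsComplement' H)
    (lam : N →* ℂˣ) (T : Subgroup G) (hNT : N ≤ T)
    (hT : ∀ g : G, g ∈ T ↔ ∀ n : N,
      lam ⟨g * (n : G) * g⁻¹, hN.conj_mem n n.2 g⟩ = lam n) :
    ∃ ν : T →* ℂˣ, ∀ n : N, ν ⟨(n : G), hNT n.2⟩ = lam n :=
  linear_character_extends_to_inertia_general G N hN hcompl lam T hNT hT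
end
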